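/- Let 0 < λ < 1 and 0 < α < 1. Then for every positive integer t, the sum ∑_{s=0}^{t-1} λ^{t-s-1}/(s+1)^α is at most κ_λ/t^α, where κ_λ = (α/e)^α · 1/(λ (ln(1/λ))^α) + 2^α/((1-α) e λ ln(1/λ)) + 2^α/(λ ln(1/λ)). -/
import Mathlib
open Real Finset

-- Lemma A: partial sums of 1/(s+1)^α
lemma aux_sum_inv_rpow (α : ℝ) (hα0 : 0 < α) (hα1 : α < 1) :
    ∀ m : ℕ, ∑ s ∈ Finset.range m, 1 / ((s : ℝ) + 1) ^ α ≤ (m : ℝ) ^ (1 - α) / (1 - α) := by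
  intro m
  induction m with
  | zero => simp [Real.zero_rpow (by linarith : (1:ℝ) - α ≠ 0)]
  | succ m ih =>
    rw [Finset.sum_range_succ]
    have hc : (0:ℝ) < 1 - α := by linarith
    have hm1 : (0:ℝ) < (m:ℝ) + 1 := by positivity
    -- Bernoulli: ((m)/(m+1))^(1-α) ≤ 1 - (1-α)/(m+1)
    have hb : ((m:ℝ) / ((m:ℝ)+1)) ^ (1-α) ≤ 1 + (1-α) * ((m:ℝ)/((m:ℝ)+1) - 1) := by
      have hs : (-1:ℝ) ≤ (m:ℝ)/((m:ℝ)+1) - 1 := by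
        have : (0:ℝ) ≤ (m:ℝ)/((m:ℝ)+1) := by positivity
        linarith
      have := rpow_one_add_le_one_add_mul_self hs (le_of_lt hc) (by linarith)
      simpa [add_sub_cancel] using this
    -- derive: m^(1-α) + (1-α)/(m+1)^α ≤ (m+1)^(1-α)
    have hP : (0:ℝ) < ((m:ℝ)+1) ^ (1-α) := Real.rpow_pos_of_pos hm1 _
    have hdiv : ((m:ℝ) / ((m:ℝ)+1)) ^ (1-α) = (m:ℝ)^(1-α) / ((m:ℝ)+1)^(1-α) :=
      Real.div_rpow (Nat.cast_nonneg m) hm1.le _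
    have hPm : ((m:ℝ)+1) ^ (1-α) / ((m:ℝ)+1) = 1 / ((m:ℝ)+1)^α := by
      rw [eq_div_iff (by positivity : ((m:ℝ)+1)^α ≠ 0)]
      rw [div_mul_eq_mul_div, ← Real.rpow_add hm1]
      rw [sub_add_cancel, Real.rpow_one, div_self hm1.ne']
    have key : (m:ℝ)^(1-α) + (1-α) * (1 / ((m:ℝ)+1)^α) ≤ ((m:ℝ)+1)^(1-α) := by
      have h2 := mul_le_mul_of_nonneg_right hb hP.le
      rw [hdiv, div_mul_cancel₀ _ hP.ne'] at h2
      have hexp : (1 + (1-α) * ((m:ℝ)/((m:ℝ)+1) - 1)) * ((m:ℝ)+1)^(1-α)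
          = ((m:ℝ)+1)^(1-α) - (1-α) * (((m:ℝ)+1)^(1-α) / ((m:ℝ)+1)) := by
        field_simp; ring
      rw [hexp, hPm] at h2
      linarith
    have hcast : ((m+1 : ℕ) : ℝ) = (m:ℝ) + 1 := by push_cast; ring
    rw [hcast]
    have h3 : ∑ x ∈ Finset.range m, 1/((x:ℝ)+1)^α + 1/((m:ℝ)+1)^α
        ≤ (m:ℝ)^(1-α)/(1-α) + 1/((m:ℝ)+1)^α := by linarith
    refine h3.trans ?_
    rw [div_add' _ _ _ hc.ne', div_le_div_iff_of_pos_right hc]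
    linarith

theorem stability_kappa_lambda_sum_bound
    (lam α : ℝ) (hlam0 : 0 < lam) (hlam1 : lam < 1)
    (hα0 : 0 < α) (hα1 : α < 1) (t : ℕ) (ht : 0 < t) :
    ∑ s ∈ Finset.range t, lam ^ (t - s - 1) / ((s : ℝ) + 1) ^ α ≤
      ((α / Real.exp 1) ^ α * (1 / (lam * (Real.log (1 / lam)) ^ α))
        + 2 ^ α / ((1 - α) * Real.exp 1 * lam * Real.log (1 / lam))
        + 2 ^ α / (lam * Real.log (1 / lam))) / (t : ℝ) ^ α := by
  set L := Real.log (1 / lam) with hLdef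
  have hL : 0 < L := Real.log_pos (one_lt_one_div hlam0 hlam1)
  have ht' : (0:ℝ) < (t:ℝ) := by exact_mod_cast ht
  have hc : (0:ℝ) < 1 - α := by linarith
  have h1lam : (0:ℝ) < 1 - lam := by linarith
  have htα : (0:ℝ) < (t:ℝ) ^ α := Real.rpow_pos_of_pos ht' α
  -- lam * L ≤ 1 - lam
  have hlamL : lam * L ≤ 1 - lam := by
    have h := Real.log_le_sub_one_of_pos (by positivity : (0:ℝ) < 1/lam)
    have h2 : lam * L ≤ lam * (1/lam - 1) :=
      mul_le_mul_of_nonneg_left h hlam0.le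
    have h3 : lam * (1/lam - 1) = 1 - lam := by field_simp
    linarith
  have hlamLpos : (0:ℝ) < lam * L := by positivity
  -- geometric sum bound
  have hgeo : ∑ s ∈ Finset.range t, lam ^ (t - s - 1) ≤ 1 / (1 - lam) := by
    have hre : ∑ s ∈ Finset.range t, lam ^ (t - s - 1)
        = ∑ s ∈ Finset.range t, lam ^ s := by
      rw [← Finset.sum_range_reflect (fun j => lam ^ j) t]
      apply Finset.sum_congr rfl
      intro s _
      congr 1
      omega
    rw [hre, geom_sum_eq hlam1.ne]
    have hpt : 0 ≤ lam ^ t := by positivity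
    have e : (lam ^ t - 1) / (lam - 1) = (1 - lam ^ t) / (1 - lam) := by
      rw [← neg_div_neg_eq]; ring_nf
    rw [e, div_le_div_iff₀ h1lam h1lam]
    nlinarith
  set m := t / 2 with hm
  have hmt : m ≤ t := Nat.div_le_self t 2
  -- split the sum
  rw [← Finset.sum_range_add_sum_Ico _ hmt]
  -- head bound
  have hhead1 : ∑ s ∈ Finset.range m, lam ^ (t - s - 1) / ((s:ℝ) + 1) ^ α
      ≤ lam ^ (t - m) * ((m:ℝ) ^ (1 - α) / (1 - α)) := by
    calc ∑ s ∈ Finset.range m, lam ^ (t - s - 1) / ((s:ℝ) + 1) ^ α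
        ≤ ∑ s ∈ Finset.range m, lam ^ (t - m) * (1 / ((s:ℝ) + 1) ^ α) := by
          apply Finset.sum_le_sum
          intro s hs
          have hsm : s < m := Finset.mem_range.mp hs
          have hpow : lam ^ (t - s - 1) ≤ lam ^ (t - m) :=
            pow_le_pow_of_le_one hlam0.le hlam1.le (by omega)
          rw [div_eq_mul_one_div]
          exact mul_le_mul_of_nonneg_right hpow (by positivity)
      _ = lam ^ (t - m) * ∑ s ∈ Finset.range m, 1 / ((s:ℝ) + 1) ^ α := by
          rw [Finset.mul_sum]
      _ ≤ lam ^ (t - m) * ((m:ℝ) ^ (1 - α) / (1 - α)) := by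
          apply mul_le_mul_of_nonneg_left (aux_sum_inv_rpow α hα0 hα1 m) (by positivity)
  have hpowhalf : lam ^ (t - m) ≤ lam ^ ((t:ℝ)/2) := by
    rw [← Real.rpow_natCast lam (t - m)]
    apply Real.rpow_le_rpow_of_exponent_ge hlam0 hlam1.le
    have h1 : t ≤ 2 * (t - m) := by omega
    have h2 : (t:ℝ) ≤ 2 * ((t - m : ℕ):ℝ) := by exact_mod_cast h1
    linarith
  have hmhalf : (m:ℝ) ^ (1 - α) ≤ ((t:ℝ)/2) ^ (1 - α) := by
    apply Real.rpow_le_rpow (Nat.cast_nonneg m) _ hc.le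
    have h1 : 2 * m ≤ t := by omega
    have h2 : 2 * (m:ℝ) ≤ (t:ℝ) := by exact_mod_cast h1
    linarith
  have hhead2 : lam ^ (t - m) * ((m:ℝ) ^ (1 - α) / (1 - α))
      ≤ lam ^ ((t:ℝ)/2) * (((t:ℝ)/2) ^ (1 - α) / (1 - α)) := by
    have h0 : (0:ℝ) ≤ lam ^ (t - m) := by positivity
    have h0' : (0:ℝ) ≤ ((m:ℝ) ^ (1 - α) / (1 - α)) := by positivity
    apply mul_le_mul hpowhalf (by gcongr) h0' (by positivity)
  -- key exponential bound : lam^(t/2) * t ≤ 2 / (e * lam * L)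
  have hlog : Real.log lam = -L := by
    rw [hLdef, one_div, Real.log_inv]; ring
  have key : lam ^ ((t:ℝ)/2) * (t:ℝ) ≤ 2 / (Real.exp 1 * lam * L) := by
    have hrw : lam ^ ((t:ℝ)/2) = Real.exp (-(L * t / 2)) := by
      rw [Real.rpow_def_of_pos hlam0, hlog]
      ring_nf
    set u := L * t / 2 with hu
    have hu0 : (0:ℝ) < u := by positivity
    have hue : u * Real.exp (-u) ≤ Real.exp (-1) := by
      have h := Real.add_one_le_exp (u - 1)
      have h2 : u ≤ Real.exp u * Real.exp (-1) := by
        rw [← Real.exp_add]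
        have : u + -1 = u - 1 := by ring
        rw [this]; linarith
      calc u * Real.exp (-u) ≤ (Real.exp u * Real.exp (-1)) * Real.exp (-u) := by
            apply mul_le_mul_of_nonneg_right h2 (Real.exp_nonneg _)
        _ = Real.exp (-1) := by
            rw [mul_comm (Real.exp u), mul_assoc, ← Real.exp_add]
            simp
    have ht2 : (t:ℝ) = 2 / L * u := by
      rw [hu]; field_simp
    rw [hrw, mul_comm, ht2]
    have hstep : 2 / L * u * Real.exp (-u) = (2 / L) * (u * Real.exp (-u)) := by ring
    rw [hstep]
    have h3 : (2 / L) * (u * Real.exp (-u)) ≤ (2 / L) * Real.exp (-1) := by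
      apply mul_le_mul_of_nonneg_left hue (by positivity)
    refine h3.trans ?_
    have e4 : 2 / L * Real.exp (-1) = 2 / (Real.exp 1 * L) := by
      rw [Real.exp_neg]; field_simp
    rw [e4]
    gcongr
    nlinarith [Real.exp_pos 1]
  have h2rp : (2:ℝ) ^ α * (2:ℝ) ^ (1 - α) = 2 := by
    rw [← Real.rpow_add two_pos]
    norm_num
  -- head final estimate
  have hhead3 : lam ^ ((t:ℝ)/2) * (((t:ℝ)/2) ^ (1 - α) / (1 - α))
      ≤ (2 ^ α / ((1 - α) * Real.exp 1 * lam * L)) / (t:ℝ) ^ α := by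
    have hX : (0:ℝ) < lam ^ ((t:ℝ)/2) := Real.rpow_pos_of_pos hlam0 _
    have hY : (0:ℝ) < ((t:ℝ)/2) ^ (1 - α) := Real.rpow_pos_of_pos (by positivity) _
    have goal2 : lam ^ ((t:ℝ)/2) * ((t:ℝ)/2) ^ (1 - α) * (t:ℝ) ^ α
        ≤ 2 ^ α / (Real.exp 1 * lam * L) := by
      have hhalf : ((t:ℝ)/2) ^ (1 - α) = (t:ℝ) ^ (1 - α) / 2 ^ (1 - α) :=
        Real.div_rpow ht'.le (by norm_num) _
      have httt : (t:ℝ) ^ (1 - α) * (t:ℝ) ^ α = (t:ℝ) := by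
        rw [← Real.rpow_add ht']; simp
      have e1 : lam ^ ((t:ℝ)/2) * ((t:ℝ) ^ (1-α) / 2 ^ (1-α)) * (t:ℝ) ^ α
          = lam ^ ((t:ℝ)/2) * ((t:ℝ) ^ (1-α) * (t:ℝ) ^ α) / 2 ^ (1-α) := by ring
      rw [hhalf, e1, httt]
      have hD : (0:ℝ) < Real.exp 1 * lam * L := by positivity
      have key2 : lam ^ ((t:ℝ)/2) * (t:ℝ) * (Real.exp 1 * lam * L) ≤ 2 := by
        have h4 := mul_le_mul_of_nonneg_right key hD.le
        rwa [div_mul_cancel₀ _ hD.ne'] at h4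
      rw [div_le_div_iff₀ (by positivity) hD]
      nlinarith [Real.rpow_pos_of_pos (two_pos : (0:ℝ) < 2) (1 - α)]
    have e3 : lam ^ ((t:ℝ)/2) * (((t:ℝ)/2) ^ (1 - α) / (1 - α))
        = (lam ^ ((t:ℝ)/2) * ((t:ℝ)/2) ^ (1 - α) * (t:ℝ) ^ α) / ((1 - α) * (t:ℝ) ^ α) := by
      field_simp
    rw [e3]
    have h5 : (lam ^ ((t:ℝ)/2) * ((t:ℝ)/2) ^ (1 - α) * (t:ℝ) ^ α) / ((1 - α) * (t:ℝ) ^ α)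
        ≤ (2 ^ α / (Real.exp 1 * lam * L)) / ((1 - α) * (t:ℝ) ^ α) := by
      gcongr
    refine h5.trans (le_of_eq ?_)
    rw [div_div, div_div]
    congr 1
    ring
  -- tail bound
  have htail1 : ∑ s ∈ Finset.Ico m t, lam ^ (t - s - 1) / ((s:ℝ) + 1) ^ α
      ≤ (2 ^ α / (t:ℝ) ^ α) * (1 / (1 - lam)) := by
    have h2t : ((t:ℝ)/2) ^ α > 0 := Real.rpow_pos_of_pos (by positivity) _
    calc ∑ s ∈ Finset.Ico m t, lam ^ (t - s - 1) / ((s:ℝ) + 1) ^ α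
        ≤ ∑ s ∈ Finset.Ico m t, (2 ^ α / (t:ℝ) ^ α) * lam ^ (t - s - 1) := by
          apply Finset.sum_le_sum
          intro s hs
          obtain ⟨hms, hst⟩ := Finset.mem_Ico.mp hs
          have h1 : t ≤ 2 * (s + 1) := by omega
          have h2 : (t:ℝ) / 2 ≤ (s:ℝ) + 1 := by
            have : (t:ℝ) ≤ 2 * ((s:ℝ) + 1) := by exact_mod_cast h1
            linarith
          have h3 : ((t:ℝ)/2) ^ α ≤ ((s:ℝ) + 1) ^ α :=
            Real.rpow_le_rpow (by positivity) h2 hα0.le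
          have h4 : 1 / ((s:ℝ) + 1) ^ α ≤ 1 / ((t:ℝ)/2) ^ α := by
            apply one_div_le_one_div_of_le h2t h3
          have h5 : 1 / ((t:ℝ)/2) ^ α = 2 ^ α / (t:ℝ) ^ α := by
            rw [Real.div_rpow ht'.le (by norm_num), one_div_div]
          rw [div_eq_mul_one_div, mul_comm]
          apply mul_le_mul_of_nonneg_right _ (by positivity)
          rw [← h5] at *
          exact h4
      _ = (2 ^ α / (t:ℝ) ^ α) * ∑ s ∈ Finset.Ico m t, lam ^ (t - s - 1) := by
          rw [Finset.mul_sum]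
      _ ≤ (2 ^ α / (t:ℝ) ^ α) * (1 / (1 - lam)) := by
          apply mul_le_mul_of_nonneg_left _ (by positivity)
          refine le_trans ?_ hgeo
          apply Finset.sum_le_sum_of_subset_of_nonneg
          · rw [Finset.range_eq_Ico]
            exact Finset.Ico_subset_Ico (Nat.zero_le m) le_rfl
          · intro i _ _; positivity
  have htail2 : (2 ^ α / (t:ℝ) ^ α) * (1 / (1 - lam)) ≤ (2 ^ α / (lam * L)) / (t:ℝ) ^ α := by
    have h1 : 1 / (1 - lam) ≤ 1 / (lam * L) := one_div_le_one_div_of_le hlamLpos hlamL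
    have h2 : (2 ^ α / (t:ℝ) ^ α) * (1 / (lam * L)) = (2 ^ α / (lam * L)) / (t:ℝ) ^ α := by
      field_simp
    rw [← h2]
    apply mul_le_mul_of_nonneg_left h1 (by positivity)
  -- assemble
  have hT1 : 0 ≤ ((α / Real.exp 1) ^ α * (1 / (lam * L ^ α))) / (t:ℝ) ^ α := by positivity
  rw [add_div, add_div]
  have hA := hhead1.trans (hhead2.trans hhead3)
  have hB := htail1.trans htail2
  linarith
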